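/- For every integer k ≥ 7, there exists a coalition partition Ψ of the path P_k with five parts such that the coalition graph CG(P_k, Ψ) is isomorphic to the path P_5. -/

import Mathlib

open SimpleGraph

attribute [local instance] Classical.propDecidable

def Dominates {V : Type*} (G : SimpleGraph V) (S : Set V) : Prop :=
  ∀ v, v ∉ S → ∃ u ∈ S, G.Adj u v

def Coalition {V : Type*} (G : SimpleGraph V) (A B : Set V) : Prop :=
  Disjoint A B ∧ ¬ Dominates G A ∧ ¬ Dominates G B ∧ Dominates G (A ∪ B)

def IsCoalitionPartition {V : Type*} (G : SimpleGraph V) (P : Finset (Set V)) : Prop :=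
  (∀ A ∈ P, A.Nonempty) ∧
  (∀ A ∈ P, ∀ B ∈ P, A ≠ B → Disjoint A B) ∧
  (∀ v : V, ∃ A ∈ P, v ∈ A) ∧
  (∀ A ∈ P, (Dominates G A ∧ ∃ v, A = {v}) ∨
    (¬ Dominates G A ∧ ∃ B ∈ P, B ≠ A ∧ Coalition G A B))

noncomputable def coalitionNumber {V : Type*} (G : SimpleGraph V) : ℕ :=
  sSup {n | ∃ P : Finset (Set V), IsCoalitionPartition G P ∧ P.card = n}

def coalitionGraph {V : Type*} (G : SimpleGraph V) (P : Finset (Set V)) :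
    SimpleGraph {A : Set V // A ∈ P} where
  Adj A B := Coalition G A.1 B.1
  symm := by
    constructor
    rintro A B ⟨d, na, nb, u⟩
    exact ⟨d.symm, nb, na, by rwa [Set.union_comm]⟩
  loopless := by
    constructor
    rintro ⟨A, hA⟩ ⟨d, na, nb, u⟩
    rw [Set.union_self] at u
    exact na u

/-!
Split the vertices `0, 1, …, k - 1` of `P_k` into five classes: the vertices `2`, `3`, `4` are
singleton classes `0`, `2`, `4`, while classes `1` and `3` start with the vertices `0` and `1`
respectively and then alternate along the tail `5, 6, 7, …`. No class dominates `P_k`, and the union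
of two classes dominates exactly when their indices differ by one (for classes `2` and `3` this
needs the vertex `6` to dominate `5`, whence `k ≥ 7`). In a partition into non-dominating classes
the coalitions are exactly the pairs with dominating union, so here the coalition graph is `P_5`.
-/

namespace IndexedPartition

variable {V ι : Type*} {s : ι → Set V}

theorem injective (hs : IndexedPartition s) : Function.Injective s :=
  fun i _ hij => hs.eq_of_mem (hs.some_mem i) (hij ▸ hs.some_mem i)

theorem card_image_univ [Fintype ι] (hs : IndexedPartition s) :
    (Finset.univ.image s).card = Fintype.card ι := by
  rw [Finset.card_image_of_injective _ hs.injective, Finset.card_univ]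

variable {G : SimpleGraph V} {H : SimpleGraph ι}

theorem coalition_iff_of_dominates_union_iff (hs : IndexedPartition s)
    (hdom : ∀ i j, Dominates G (s i ∪ s j) ↔ H.Adj i j) (i j : ι) :
    Coalition G (s i) (s j) ↔ H.Adj i j := by
  have not_dominates : ∀ i, ¬ Dominates G (s i) := fun i h =>
    H.irrefl ((hdom i i).1 (by rwa [Set.union_self]))
  exact ⟨fun h => (hdom i j).1 h.2.2.2,
    fun h => ⟨hs.disjoint h.ne, not_dominates i, not_dominates j, (hdom i j).2 h⟩⟩

variable [Fintype ι]

theorem isCoalitionPartition_image_univ (hs : IndexedPartition s)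
    (hcoal : ∀ i j, Coalition G (s i) (s j) ↔ H.Adj i j) (hH : ∀ i, ∃ j, H.Adj i j) :
    IsCoalitionPartition G (Finset.univ.image s) := by
  simp only [IsCoalitionPartition, Finset.forall_mem_image, Finset.exists_mem_image,
    Finset.mem_univ, true_and, forall_const]
  refine ⟨fun i => ⟨_, hs.some_mem i⟩, fun i j hij => hs.disjoint (ne_of_apply_ne s hij),
    fun v => ⟨_, hs.mem_index v⟩, fun i => Or.inr ?_⟩
  obtain ⟨j, hij⟩ := hH i
  have hc := (hcoal i j).2 hij
  exact ⟨hc.2.1, j, hs.injective.ne hij.ne.symm, hc⟩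

noncomputable def coalitionGraphImageUnivIso (hs : IndexedPartition s)
    (hcoal : ∀ i j, Coalition G (s i) (s j) ↔ H.Adj i j) :
    coalitionGraph G (Finset.univ.image s) ≃g H :=
  RelIso.symm
    { toEquiv := Equiv.ofBijective (fun i => ⟨s i, Finset.mem_image_of_mem s (Finset.mem_univ i)⟩)
        ⟨fun i j hij => hs.injective (congrArg Subtype.val hij), by
          rintro ⟨A, hA⟩
          obtain ⟨i, -, rfl⟩ := Finset.mem_image.1 hA
          exact ⟨i, rfl⟩⟩
      map_rel_iff' := hcoal _ _ }

end IndexedPartition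

theorem pathGraph_exists_adj {n : ℕ} (hn : 2 ≤ n) (i : Fin n) : ∃ j, (pathGraph n).Adj i j := by
  by_cases hi : i.val + 1 < n
  · exact ⟨⟨i + 1, hi⟩, pathGraph_adj.2 (Or.inl rfl)⟩
  · exact ⟨⟨i - 1, by omega⟩, pathGraph_adj.2 (Or.inr (by simp only; omega))⟩

theorem dominates_pathGraph_setOf_iff {k : ℕ} (p : ℕ → Prop) :
    Dominates (pathGraph k) {v : Fin k | p v} ↔
      ∀ m < k, p m ∨ (0 < m ∧ p (m - 1)) ∨ (m + 1 < k ∧ p (m + 1)) := by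
  constructor
  · intro h m hm
    by_cases hpm : p m
    · exact Or.inl hpm
    obtain ⟨u, hu, hadj⟩ := h ⟨m, hm⟩ hpm
    rcases pathGraph_adj.1 hadj with hum | hum <;> simp only at hum
    · exact Or.inr (Or.inl ⟨by omega, by rwa [show m - 1 = u by omega]⟩)
    · exact Or.inr (Or.inr ⟨by omega, by rwa [hum]⟩)
  · intro h v hv
    rcases h v v.isLt with hpv | ⟨hv0, hpv⟩ | ⟨hvk, hpv⟩
    · exact absurd hpv hv
    · exact ⟨⟨v - 1, by omega⟩, hpv, pathGraph_adj.2 (Or.inl (by simp only; omega))⟩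
    · exact ⟨⟨v + 1, hvk⟩, hpv, pathGraph_adj.2 (Or.inr rfl)⟩

def pathCoalitionClass : Fin 5 → ℕ → Prop :=
  ![(· = 2), fun m => m = 0 ∨ (5 ≤ m ∧ m % 2 = 1), (· = 3),
    fun m => m = 1 ∨ (6 ≤ m ∧ m % 2 = 0), (· = 4)]

def pathCoalitionPart (k : ℕ) (i : Fin 5) : Set (Fin k) := {v | pathCoalitionClass i v}

noncomputable def pathCoalitionPartition {k : ℕ} (hk : 5 ≤ k) :
    IndexedPartition (pathCoalitionPart k) :=
  .mk' _
    (fun i j hij => Set.disjoint_left.2 fun v hi hj => hij (by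
      fin_cases i <;> fin_cases j <;>
        simp only [pathCoalitionPart, Set.mem_ofPred_eq, pathCoalitionClass, Fin.zero_eta,
          Fin.mk_one, Fin.reduceFinMk, Matrix.cons_val] at hi hj <;>
        first | rfl | omega))
    (fun i => by
      fin_cases i
      exacts [⟨⟨2, by omega⟩, rfl⟩, ⟨⟨0, by omega⟩, Or.inl rfl⟩, ⟨⟨3, by omega⟩, rfl⟩,
        ⟨⟨1, by omega⟩, Or.inl rfl⟩, ⟨⟨4, by omega⟩, rfl⟩])
    (fun v => by
      simp only [pathCoalitionPart, Set.mem_ofPred_eq, Fin.exists_fin_succ, pathCoalitionClass,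
        Matrix.cons_val_zero, Matrix.cons_val_succ, IsEmpty.exists_iff, or_false]
      omega)

theorem dominates_pathCoalitionPart_union_iff {k : ℕ} (hk : 7 ≤ k) (i j : Fin 5) :
    Dominates (pathGraph k) (pathCoalitionPart k i ∪ pathCoalitionPart k j) ↔
      (pathGraph 5).Adj i j := by
  rw [pathCoalitionPart, pathCoalitionPart, ← Set.ofPred_or,
    dominates_pathGraph_setOf_iff (fun m => pathCoalitionClass i m ∨ pathCoalitionClass j m),
    pathGraph_adj]
  fin_cases i <;> fin_cases j <;>
    simp only [pathCoalitionClass, Fin.zero_eta, Fin.mk_one, Fin.reduceFinMk, Matrix.cons_val] <;>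
    first
    | exact iff_of_true (fun m hm => by omega) (by decide)
    | exact iff_of_false (fun h => by have := h 0 (by omega); omega) (by decide)
    | exact iff_of_false (fun h => by have := h 2 (by omega); omega) (by decide)
    | exact iff_of_false (fun h => by have := h 3 (by omega); omega) (by decide)
    | exact iff_of_false (fun h => by have := h 4 (by omega); omega) (by decide)

theorem stmt19 (k : ℕ) (hk : 7 ≤ k) :
    ∃ P : Finset (Set (Fin k)),
      IsCoalitionPartition (SimpleGraph.pathGraph k) P ∧ P.card = 5 ∧
      Nonempty ((coalitionGraph (SimpleGraph.pathGraph k) P) ≃g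
        SimpleGraph.pathGraph 5) := by
  have hs := pathCoalitionPartition (by omega : 5 ≤ k)
  have hcoal := hs.coalition_iff_of_dominates_union_iff (dominates_pathCoalitionPart_union_iff hk)
  exact ⟨_, hs.isCoalitionPartition_image_univ hcoal (pathGraph_exists_adj (by norm_num)),
    hs.card_image_univ.trans (Fintype.card_fin 5), ⟨hs.coalitionGraphImageUnivIso hcoal⟩⟩
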